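/- Fix w* ≠ 0, τ₁*², τ₂*² > 0 and y ≠ 0. Define D₂₁(η) = (1/2) log(1 − η² w*² τ₁*² / (η(w*² τ₁*² + τ₂*²) + (1−η) y²)) + (η/2) log(1 + w*² τ₁*² / τ₂*²) for η ∈ (0,1). Then the argument of the first logarithm lies in (0,1) for all η ∈ (0,1), D₂₁(η) > 0 on (0,1), D₂₁ is strictly concave on (0,1), lim_{η→0⁺} D₂₁(η) = 0 and lim_{η→1⁻} D₂₁(η) = 0; hence D₂₁ attains a maximum at some interior point η* ∈ (0,1). -/

import Mathlib

open Filter Set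

/-- The concentration exponent `D₂₁(η)` for the true model `X(1) → X(2)`
with a fraction `η` of observational samples. -/
noncomputable def D21 (w τ1 τ2 y : ℝ) (η : ℝ) : ℝ :=
  (1 / 2) * Real.log
      (1 - η ^ 2 * w ^ 2 * τ1 / (η * (w ^ 2 * τ1 + τ2) + (1 - η) * y ^ 2))
    + η / 2 * Real.log (1 + w ^ 2 * τ1 / τ2)

/-!
Write `a = w²τ₁`, `b = a + τ₂`, `c = y²` and `D(η) = η b + (1 - η) c`, which is affine and
positive on `[0, 1]`. The argument of the first logarithm is `1 - a η² / D(η)`, and `η ↦ η² / D(η)`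
is strictly convex: by Bergström's identity its convexity defect at `p x + (1 - p) z` is
`p (1 - p) (x D(z) - z D(x))² / (D(x) D(z) D(p x + (1 - p) z))`, and `x D(z) - z D(x) = c (x - z)`.
So the argument is strictly concave and positive, its logarithm is strictly concave, and the second
term of `D₂₁` is linear. `D₂₁` vanishes at `0` and at `1` (there `(1 - a/b)(1 + a/τ₂) = 1`), so it
is positive in between, continuity at the endpoints gives the limits, and the interior extremum
that a continuous function with equal endpoint values has on `[0, 1]` cannot be a minimum.
-/

lemma mul_sq_div_add_mul_sq_div_sub (x z : ℝ) {p u v : ℝ} (hu : u ≠ 0) (hv : v ≠ 0)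
    (huv : p * u + (1 - p) * v ≠ 0) :
    p * (x ^ 2 / u) + (1 - p) * (z ^ 2 / v) - (p * x + (1 - p) * z) ^ 2 / (p * u + (1 - p) * v)
      = p * (1 - p) * (x * v - z * u) ^ 2 / (u * v * (p * u + (1 - p) * v)) := by
  field_simp
  ring

lemma StrictConcaveOn.log {E : Type*} [AddCommGroup E] [Module ℝ E] {s : Set E} {f : E → ℝ}
    (hf : StrictConcaveOn ℝ s f) (hpos : ∀ x ∈ s, 0 < f x) :
    StrictConcaveOn ℝ s fun x => Real.log (f x) := by
  refine ⟨hf.1, fun x hx y hy hxy a b ha hb hab => ?_⟩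
  have hmix : 0 < a • f x + b • f y := by
    have := hpos x hx
    have := hpos y hy
    simp only [smul_eq_mul]
    positivity
  calc a • Real.log (f x) + b • Real.log (f y)
      ≤ Real.log (a • f x + b • f y) :=
        strictConcaveOn_log_Ioi.concaveOn.2 (hpos x hx) (hpos y hy) ha.le hb.le hab
    _ < Real.log (f (a • x + b • y)) := Real.log_lt_log hmix (hf.2 hx hy hxy ha hb hab)

section Interpolation

variable {a b c η : ℝ}

lemma sq_mul_lt_interp (ha : 0 ≤ a) (hab : a < b) (hc : 0 < c) (hη : η ∈ Icc 0 1) :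
    η ^ 2 * a < η * b + (1 - η) * c := by
  obtain ⟨h0, h1⟩ := hη
  have hsq : η ^ 2 * a ≤ η * a := by nlinarith [mul_nonneg (mul_nonneg h0 (sub_nonneg.2 h1)) ha]
  rcases h0.eq_or_lt with rfl | h0
  · simpa using hc
  · nlinarith [mul_nonneg (sub_nonneg.2 h1) hc.le]

lemma interp_pos (hb : 0 < b) (hc : 0 < c) (hη : η ∈ Icc 0 1) : 0 < η * b + (1 - η) * c := by
  simpa using sq_mul_lt_interp le_rfl hb hc hη

lemma one_sub_sq_mul_div_interp_pos (ha : 0 ≤ a) (hab : a < b) (hc : 0 < c)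
    (hη : η ∈ Icc 0 1) : 0 < 1 - η ^ 2 * a / (η * b + (1 - η) * c) := by
  have hlt := sq_mul_lt_interp ha hab hc hη
  have hD : 0 < η * b + (1 - η) * c := (by positivity : 0 ≤ η ^ 2 * a).trans_lt hlt
  linarith [(div_lt_one hD).2 hlt]

lemma one_sub_sq_mul_div_interp_mem_Ioo (ha : 0 < a) (hab : a < b) (hc : 0 < c)
    (hη : η ∈ Ioo 0 1) : 1 - η ^ 2 * a / (η * b + (1 - η) * c) ∈ Ioo 0 1 := by
  have hD := interp_pos (ha.trans hab) hc (Ioo_subset_Icc_self hη)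
  have : 0 < η ^ 2 * a / (η * b + (1 - η) * c) := by
    have := hη.1
    positivity
  exact ⟨one_sub_sq_mul_div_interp_pos ha.le hab hc (Ioo_subset_Icc_self hη), by linarith⟩

lemma strictConcaveOn_one_sub_sq_mul_div_interp (ha : 0 < a) (hb : 0 < b) (hc : 0 < c) :
    StrictConcaveOn ℝ (Icc 0 1) fun η => 1 - η ^ 2 * a / (η * b + (1 - η) * c) := by
  refine ⟨convex_Icc 0 1, fun x hx z hz hxz p q hp hq hpq => ?_⟩
  obtain rfl : q = 1 - p := by linarith
  have hDm := interp_pos hb hc (convex_Icc 0 1 hx hz hp.le hq.le hpq)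
  have hDx := interp_pos hb hc hx
  have hDz := interp_pos hb hc hz
  simp only [smul_eq_mul] at hDm ⊢
  rw [show (p * x + (1 - p) * z) * b + (1 - (p * x + (1 - p) * z)) * c
      = p * (x * b + (1 - x) * c) + (1 - p) * (z * b + (1 - z) * c) by ring] at hDm ⊢
  have hcross : x * (z * b + (1 - z) * c) - z * (x * b + (1 - x) * c) = c * (x - z) := by ring
  generalize x * b + (1 - x) * c = Dx at hDx hDm hcross ⊢
  generalize z * b + (1 - z) * c = Dz at hDz hDm hcross ⊢
  have hgap :
      0 < a * (p * (1 - p) * (x * Dz - z * Dx) ^ 2 / (Dx * Dz * (p * Dx + (1 - p) * Dz))) := by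
    have := sub_ne_zero.2 hxz
    rw [hcross]
    positivity
  linear_combination hgap - a * mul_sq_div_add_mul_sq_div_sub x z hDx.ne' hDz.ne' hDm.ne'

end Interpolation

section D21

variable {w τ1 τ2 y η : ℝ}

lemma D21_arg_eq (w τ1 τ2 y η : ℝ) :
    η ^ 2 * w ^ 2 * τ1 / (η * (w ^ 2 * τ1 + τ2) + (1 - η) * y ^ 2)
      = η ^ 2 * (w ^ 2 * τ1) / (η * (w ^ 2 * τ1 + τ2) + (1 - η) * y ^ 2) := by
  rw [mul_assoc]

lemma D21_zero : D21 w τ1 τ2 y 0 = 0 := by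
  simp [D21]

lemma D21_one (h1 : 0 ≤ τ1) (h2 : 0 < τ2) : D21 w τ1 τ2 y 1 = 0 := by
  have hb : 0 < w ^ 2 * τ1 + τ2 := by positivity
  have hinv : 1 - 1 ^ 2 * w ^ 2 * τ1 / (1 * (w ^ 2 * τ1 + τ2) + (1 - 1) * y ^ 2)
      = (1 + w ^ 2 * τ1 / τ2)⁻¹ := by
    field_simp
    ring
  rw [D21, hinv, Real.log_inv]
  ring

lemma strictConcaveOn_D21 (hw : w ≠ 0) (h1 : 0 < τ1) (h2 : 0 < τ2) (hy : y ≠ 0) :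
    StrictConcaveOn ℝ (Icc 0 1) (D21 w τ1 τ2 y) := by
  have ha : 0 < w ^ 2 * τ1 := by positivity
  have hlog := (strictConcaveOn_one_sub_sq_mul_div_interp ha (by linarith : 0 < w ^ 2 * τ1 + τ2)
    (by positivity : 0 < y ^ 2)).log fun η hη =>
      one_sub_sq_mul_div_interp_pos ha.le (by linarith) (by positivity) hη
  refine ⟨convex_Icc 0 1, fun x hx z hz hxz p q hp hq hpq => ?_⟩
  have := hlog.2 hx hz hxz hp hq hpq
  simp only [D21, D21_arg_eq, smul_eq_mul] at this ⊢
  linear_combination this / 2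

lemma continuousAt_D21 (hw : w ≠ 0) (h1 : 0 < τ1) (h2 : 0 < τ2) (hy : y ≠ 0)
    (hη : η ∈ Icc 0 1) : ContinuousAt (D21 w τ1 τ2 y) η := by
  have ha : 0 < w ^ 2 * τ1 := by positivity
  have hD := (interp_pos (by linarith : 0 < w ^ 2 * τ1 + τ2) (by positivity : 0 < y ^ 2) hη).ne'
  have hg := (one_sub_sq_mul_div_interp_pos ha.le (by linarith : w ^ 2 * τ1 < w ^ 2 * τ1 + τ2)
    (by positivity : 0 < y ^ 2) hη).ne'
  rw [← D21_arg_eq] at hg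
  unfold D21
  fun_prop (disch := assumption)

end D21

theorem stmt_14 (w τ1 τ2 y : ℝ) (hw : w ≠ 0) (h1 : 0 < τ1) (h2 : 0 < τ2)
    (hy : y ≠ 0) :
    (∀ η ∈ Set.Ioo (0 : ℝ) 1,
        1 - η ^ 2 * w ^ 2 * τ1 / (η * (w ^ 2 * τ1 + τ2) + (1 - η) * y ^ 2)
          ∈ Set.Ioo (0 : ℝ) 1) ∧
      (∀ η ∈ Set.Ioo (0 : ℝ) 1, 0 < D21 w τ1 τ2 y η) ∧
      StrictConcaveOn ℝ (Set.Ioo (0 : ℝ) 1) (D21 w τ1 τ2 y) ∧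
      Tendsto (D21 w τ1 τ2 y) (nhdsWithin 0 (Set.Ioi 0)) (nhds 0) ∧
      Tendsto (D21 w τ1 τ2 y) (nhdsWithin 1 (Set.Iio 1)) (nhds 0) ∧
      ∃ η ∈ Set.Ioo (0 : ℝ) 1,
        ∀ x ∈ Set.Ioo (0 : ℝ) 1, D21 w τ1 τ2 y x ≤ D21 w τ1 τ2 y η := by
  have hconc := strictConcaveOn_D21 hw h1 h2 hy
  have hcont η (hη : η ∈ Icc (0 : ℝ) 1) := continuousAt_D21 hw h1 h2 hy hη
  have hzero : D21 w τ1 τ2 y 0 = 0 := D21_zero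
  have hone : D21 w τ1 τ2 y 1 = 0 := D21_one h1.le h2
  have hpos : ∀ η ∈ Ioo (0 : ℝ) 1, 0 < D21 w τ1 τ2 y η := fun η hη => by
    simpa [hzero, hone] using hconc.lt_on_openSegment (left_mem_Icc.2 zero_le_one)
      (right_mem_Icc.2 zero_le_one) zero_ne_one (by rwa [openSegment_eq_Ioo zero_lt_one])
  refine ⟨fun η hη => ?_, hpos, hconc.subset Ioo_subset_Icc_self (convex_Ioo 0 1), ?_, ?_, ?_⟩
  · rw [D21_arg_eq]
    exact one_sub_sq_mul_div_interp_mem_Ioo (by positivity) (by linarith) (by positivity) hη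
  · simpa only [hzero] using
      (hcont 0 (left_mem_Icc.2 zero_le_one)).tendsto.mono_left nhdsWithin_le_nhds
  · simpa only [hone] using
      (hcont 1 (right_mem_Icc.2 zero_le_one)).tendsto.mono_left nhdsWithin_le_nhds
  · obtain ⟨η, hη, hmin | hmax⟩ := exists_Ioo_extr_on_Icc zero_lt_one
      (fun x hx => (hcont x hx).continuousWithinAt) (hzero.trans hone.symm)
    · exact absurd (hmin (left_mem_Icc.2 zero_le_one)) (by simpa [hzero] using hpos η hη)
    · exact ⟨η, hη, fun x hx => hmax (Ioo_subset_Icc_self hx)⟩
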